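/- For every T ≥ 23, the ratio of the exploration time of an agent with a fixed safety net R = T to that of an agent without a safety net satisfies (T + 1 − √(4T + 1)) / ((T − √(2T))/2) ≥ 2(T − √(5T))/(T − √(2T)) ≥ 3/2. Hence for T ≥ 23, financial support for a fixed duration lets the agent explore the striving arm at least 1.5 times longer than an unsupported agent. -/

import Mathlib

/-!
Write `d = T - √(2T)`. Since `√(4T + 1) ≤ 1 + √(5T)`, the numerator of the first ratio is at least
`T - √(5T)`, which gives the first inequality. The second one, `3 d ≤ 4 (T - √(5T))`, is
`(4√5 - 3√2) √T ≤ T`, i.e. `4√5 - 3√2 ≤ √T`; as `(4√5 - 3√2)² = 98 - 24√10 < 23`, it holds for `T ≥ 23`.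
-/

open Real

lemma sqrt_mul_lt_of_lt {a T : ℝ} (ha : 0 ≤ a) (h : a < T) : √(a * T) < T := by
  rw [sqrt_lt' (by linarith)]
  nlinarith

lemma sqrt_four_mul_add_one_le {T : ℝ} (hT : 0 ≤ T) : √(4 * T + 1) ≤ 1 + √(5 * T) := by
  have hsq : √(5 * T) ^ 2 = 5 * T := sq_sqrt (by linarith)
  rw [sqrt_le_left (by positivity)]
  nlinarith [sqrt_nonneg (5 * T)]

lemma four_sqrt_five_sub_three_sqrt_two_sq_lt : (4 * √5 - 3 * √2) ^ 2 < 23 := by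
  have h10 : √5 * √2 = √10 := by rw [← sqrt_mul (by norm_num)]; norm_num
  have h75 : 75 / 24 < √10 := by
    rw [lt_sqrt (by norm_num)]
    norm_num
  have h5 : √5 ^ 2 = 5 := sq_sqrt (by norm_num)
  have h2 : √2 ^ 2 = 2 := sq_sqrt (by norm_num)
  nlinarith

lemma four_sqrt_five_mul_sub_three_sqrt_two_mul_le {T : ℝ} (hT : 23 ≤ T) :
    4 * √(5 * T) - 3 * √(2 * T) ≤ T := by
  have hc : 4 * √5 - 3 * √2 ≤ √T :=
    calc 4 * √5 - 3 * √2 ≤ |4 * √5 - 3 * √2| := le_abs_self _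
      _ = √((4 * √5 - 3 * √2) ^ 2) := (sqrt_sq_eq_abs _).symm
      _ ≤ √T := sqrt_le_sqrt (by linarith [four_sqrt_five_sub_three_sqrt_two_sq_lt])
  calc 4 * √(5 * T) - 3 * √(2 * T) = (4 * √5 - 3 * √2) * √T := by
        rw [sqrt_mul (by norm_num), sqrt_mul (by norm_num)]; ring
    _ ≤ √T * √T := mul_le_mul_of_nonneg_right hc (sqrt_nonneg T)
    _ = T := mul_self_sqrt (by linarith)

theorem stmt14 (T : ℝ) (hT : 23 ≤ T) :
    2 * (T - Real.sqrt (5 * T)) / (T - Real.sqrt (2 * T)) ≤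
      (T + 1 - Real.sqrt (4 * T + 1)) / ((T - Real.sqrt (2 * T)) / 2) ∧
    3 / 2 ≤ 2 * (T - Real.sqrt (5 * T)) / (T - Real.sqrt (2 * T)) := by
  have hden : 0 < T - √(2 * T) := sub_pos.2 (sqrt_mul_lt_of_lt (by norm_num) (by linarith))
  constructor
  · rw [div_div_eq_mul_div]
    have hnum := sqrt_four_mul_add_one_le (by linarith : 0 ≤ T)
    exact div_le_div_of_nonneg_right (by linarith) hden.le
  · rw [le_div_iff₀ hden]
    linarith [four_sqrt_five_mul_sub_three_sqrt_two_mul_le hT]
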